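/- Let Y be a nonempty finite type (the discretized wall-normal grid) and let u : Y → (Fin 3 → ℂ) be a velocity perturbation field. Then the L2 operator norm of the block-diagonal matrix Matrix.blockDiagonal (fun y => uΞ (u y)) equals the maximum over y : Y of the Euclidean norm Real.sqrt (‖(u y) 0‖² + ‖(u y) 1‖² + ‖(u y) 2‖²); that is, the H∞ norm of the uncertainty gain equals the largest velocity-perturbation magnitude present in the flow. -/

import Mathlib

/-!
The operator norm of a block-diagonal matrix is the largest norm of its blocks, because the
squared Euclidean norm of a vector splits as the sum of the squared norms of its slices. Each
block is a coisometry up to scale, `uΞ q * (uΞ q)ᴴ = ‖q‖² • 1`, so the C⋆-identity gives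
`‖uΞ q‖ = ‖q‖`.
-/

open scoped Matrix.Norms.L2Operator

noncomputable section

/-- The 3×9 matrix gain representing the nonlinear advection term `u·∇u`:
`(uΞ q) i (i', j) = if i = i' then -(q j) else 0`. -/
def uΞ (q : Fin 3 → ℂ) : Matrix (Fin 3) (Fin 3 × Fin 3) ℂ :=
  fun i p => if i = p.1 then -(q p.2) else 0

section

open Matrix WithLp

variable {𝕜 : Type*} [RCLike 𝕜] {m n Y : Type*} [Fintype n] [Fintype Y]

lemma Matrix.blockDiagonal_mulVec_apply {α : Type*} [NonUnitalNonAssocSemiring α] [DecidableEq Y]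
    (f : Y → Matrix m n α) (x : n × Y → α) (i : m) (y : Y) :
    (blockDiagonal f *ᵥ x) (i, y) = (f y *ᵥ fun j => x (j, y)) i := by
  simp only [mulVec, dotProduct, Fintype.sum_prod_type_right, blockDiagonal_apply]
  rw [Finset.sum_eq_single y (fun y' _ hy' => by simp [Ne.symm hy']) (by simp)]
  simp

lemma EuclideanSpace.norm_sq_toLp_prod (x : n × Y → 𝕜) :
    ‖toLp 2 x‖ ^ 2 = ∑ y, ‖toLp 2 fun j => x (j, y)‖ ^ 2 := by
  simp only [EuclideanSpace.norm_sq_eq, Fintype.sum_prod_type_right]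

variable [Fintype m] [DecidableEq n]

lemma Matrix.l2_opNorm_mulVec_toLp_le (A : Matrix m n 𝕜) (v : n → 𝕜) :
    ‖toLp 2 (A *ᵥ v)‖ ≤ ‖A‖ * ‖toLp 2 v‖ :=
  A.l2_opNorm_mulVec (toLp 2 v)

lemma Matrix.l2_opNorm_le_of_mulVec_le {A : Matrix m n 𝕜} {M : ℝ} (hM : 0 ≤ M)
    (h : ∀ v : n → 𝕜, ‖toLp 2 (A *ᵥ v)‖ ≤ M * ‖toLp 2 v‖) : ‖A‖ ≤ M :=
  ContinuousLinearMap.opNorm_le_bound _ hM fun x => h (ofLp x)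

variable [DecidableEq Y]

lemma Matrix.l2_opNorm_blockDiagonal_le {f : Y → Matrix m n 𝕜} {M : ℝ} (hM₀ : 0 ≤ M)
    (hM : ∀ y, ‖f y‖ ≤ M) : ‖blockDiagonal f‖ ≤ M := by
  refine l2_opNorm_le_of_mulVec_le hM₀ fun x => ?_
  refine (sq_le_sq₀ (by positivity) (by positivity)).mp ?_
  simp only [mul_pow, EuclideanSpace.norm_sq_toLp_prod, blockDiagonal_mulVec_apply, Finset.mul_sum]
  gcongr with y
  rw [← mul_pow]
  gcongr
  exact (l2_opNorm_mulVec_toLp_le _ _).trans (mul_le_mul_of_nonneg_right (hM y) (norm_nonneg _))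

lemma Matrix.norm_le_l2_opNorm_blockDiagonal (f : Y → Matrix m n 𝕜) (y : Y) :
    ‖f y‖ ≤ ‖blockDiagonal f‖ := by
  refine l2_opNorm_le_of_mulVec_le (norm_nonneg _) fun v => ?_
  set x : n × Y → 𝕜 := fun p => if p.2 = y then v p.1 else 0
  have hx_slice (y' : Y) : (fun j => x (j, y')) = if y' = y then v else 0 := by
    split_ifs with h <;> ext j <;> simp [x, h]
  have hx_norm : ‖toLp 2 x‖ = ‖toLp 2 v‖ := by
    rw [← sq_eq_sq₀ (norm_nonneg _) (norm_nonneg _), EuclideanSpace.norm_sq_toLp_prod]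
    simp [hx_slice, apply_ite]
  have hslice_le : ‖toLp 2 (f y *ᵥ v)‖ ≤ ‖toLp 2 (blockDiagonal f *ᵥ x)‖ := by
    refine (sq_le_sq₀ (by positivity) (by positivity)).mp ?_
    rw [EuclideanSpace.norm_sq_toLp_prod]
    convert Finset.single_le_sum (f := fun y' => ‖toLp 2 fun j => (blockDiagonal f *ᵥ x) (j, y')‖ ^ 2)
      (fun y' _ => sq_nonneg _) (Finset.mem_univ y)
    simp [blockDiagonal_mulVec_apply, hx_slice]
  calc ‖toLp 2 (f y *ᵥ v)‖ ≤ ‖toLp 2 (blockDiagonal f *ᵥ x)‖ := hslice_le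
    _ ≤ ‖blockDiagonal f‖ * ‖toLp 2 x‖ := l2_opNorm_mulVec_toLp_le _ _
    _ = ‖blockDiagonal f‖ * ‖toLp 2 v‖ := by rw [hx_norm]

lemma Matrix.l2_opNorm_blockDiagonal [Nonempty Y] (f : Y → Matrix m n 𝕜) :
    ‖blockDiagonal f‖ = Finset.univ.sup' Finset.univ_nonempty fun y => ‖f y‖ := by
  have hle (y : Y) : ‖f y‖ ≤ Finset.univ.sup' Finset.univ_nonempty fun y => ‖f y‖ :=
    Finset.le_sup' (fun y => ‖f y‖) (Finset.mem_univ y)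
  refine le_antisymm (l2_opNorm_blockDiagonal_le ?_ hle) ?_
  · exact (norm_nonneg _).trans (hle (Classical.arbitrary Y))
  · exact Finset.sup'_le _ _ fun y _ => norm_le_l2_opNorm_blockDiagonal f y

lemma Matrix.l2_opNorm_eq_sqrt_of_mul_conjTranspose_eq_smul_one [DecidableEq m] [Nonempty m]
    {A : Matrix m n 𝕜} {r : ℝ} (hr : 0 ≤ r) (h : A * Aᴴ = (r : 𝕜) • 1) : ‖A‖ = √r := by
  have hsq : ‖A‖ * ‖A‖ = r := by
    rw [← l2_opNorm_conjTranspose A, ← l2_opNorm_conjTranspose_mul_self, conjTranspose_conjTranspose,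
      h, smul_one_eq_diagonal, l2_opNorm_diagonal, pi_norm_const, RCLike.norm_ofReal, abs_of_nonneg hr]
  rw [← hsq, Real.sqrt_mul_self (norm_nonneg _)]

end

open Matrix

lemma uΞ_mul_conjTranspose (q : Fin 3 → ℂ) :
    uΞ q * (uΞ q)ᴴ = ((∑ j, ‖q j‖ ^ 2 : ℝ) : ℂ) • 1 := by
  ext i i'
  rcases eq_or_ne i i' with rfl | h
  · simp [uΞ, mul_apply, Fintype.sum_prod_type, Complex.mul_conj']
  · simp [uΞ, mul_apply, Fintype.sum_prod_type, h, Ne.symm h]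

lemma l2_opNorm_uΞ (q : Fin 3 → ℂ) : ‖uΞ q‖ = √(‖q 0‖ ^ 2 + ‖q 1‖ ^ 2 + ‖q 2‖ ^ 2) := by
  rw [← Fin.sum_univ_three fun j => ‖q j‖ ^ 2]
  exact l2_opNorm_eq_sqrt_of_mul_conjTranspose_eq_smul_one (by positivity) (uΞ_mul_conjTranspose q)

theorem l2_opNorm_blockDiagonal_uXi {Y : Type*}
    [Fintype Y] [DecidableEq Y] [Nonempty Y]
    (u : Y → (Fin 3 → ℂ)) :
    ‖Matrix.blockDiagonal (fun y => uΞ (u y))‖ =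
      Finset.univ.sup' Finset.univ_nonempty
        (fun y => Real.sqrt (‖u y 0‖ ^ 2 + ‖u y 1‖ ^ 2 + ‖u y 2‖ ^ 2)) := by
  rw [l2_opNorm_blockDiagonal]
  exact Finset.sup'_congr _ rfl fun y _ => l2_opNorm_uΞ (u y)
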